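/- arXiv:2302.12138 — 4 statements merged into one kernel-verified Lean document; each statement's English description precedes it below -/
import Mathlib

section
/- Let L be a finite-dimensional Lie algebra over ℝ, V a nonzero finite-dimensional Lie module over L that is irreducible (every Lie submodule of V is ⊥ or ⊤), and Z ∈ L. Assume: (i) the adjoint endomorphism ad Z of L is diagonalizable with integer eigenvalues, i.e., the supremum over i ∈ ℤ of the eigenspaces of ad Z with eigenvalue i is all of L; (ii) the action of Z on V is diagonalizable over ℝ, i.e., the supremum over θ ∈ ℝ of the eigenspaces of the endomorphism v ↦ ⁅Z, v⁆ is all of V. Let θmax be the largest real number whose eigenspace for the action of Z on V is nonzero. Then the set {v ∈ V | ⁅x, v⁆ = 0 for every integer i > 0 and every x in the i-eigenspace of ad Z} is exactly the θmax-eigenspace of the action of Z on V. -/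
/-!
`Z` preserves `ker 𝔭₊` and acts diagonalizably on `V`, so `ker 𝔭₊` is spanned by its
intersections with the eigenspaces `V_θ`. If `0 ≠ v ∈ ker 𝔭₊ ∩ V_θ`, the subspace generated from
`v` by `𝔤₀ ⊕ 𝔭₋` is also stable under `𝔭₊` (move `𝔭₊` to the right with the Jacobi identity),
hence is a nonzero Lie submodule, hence all of `V`. Since `𝔤₀ ⊕ 𝔭₋` does not raise eigenvalues
of `Z`, this forces `θmax ≤ θ`, i.e. `θ = θmax`. Conversely, for `i > 0` the elements of `𝔤_i` map
`V_θmax` into `V_(θmax + i) = 0`.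
-/

open Module.End LieModule

section

variable {R L M : Type*} [CommRing R] [LieRing L] [LieAlgebra R L]
  [AddCommGroup M] [Module R M] [LieRingModule L M] [LieModule R L M]

theorem lie_mem_eigenspace_add {Z x : L} {c : R}
    (hx : x ∈ eigenspace (LieAlgebra.ad R L Z) c) {m : M} {θ : R}
    (hm : m ∈ eigenspace (toEnd R L M Z) θ) :
    ⁅x, m⁆ ∈ eigenspace (toEnd R L M Z) (θ + c) := by
  rw [mem_eigenspace_iff, LieAlgebra.ad_apply] at hx
  rw [mem_eigenspace_iff, toEnd_apply_apply] at hm ⊢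
  rw [leibniz_lie, hx, hm, smul_lie, lie_smul, add_smul, add_comm]

theorem lie_mem_of_mem_biSup {ι κ : Type*} {p : ι → Prop} {q : κ → Prop}
    {A : ι → Submodule R L} {B : κ → Submodule R M} {C : Submodule R M}
    (h : ∀ i, p i → ∀ j, q j → ∀ x ∈ A i, ∀ m ∈ B j, ⁅x, m⁆ ∈ C)
    {x : L} (hx : x ∈ ⨆ (i) (_ : p i), A i) {m : M} (hm : m ∈ ⨆ (j) (_ : q j), B j) :
    ⁅x, m⁆ ∈ C := by
  have hA : ⨆ (i) (_ : p i), A i ≤ C.comap ((toEnd R L M : L →ₗ[R] M →ₗ[R] M).flip m) :=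
    iSup₂_le fun i hi x hx =>
      (iSup₂_le fun j hj m hm => h i hi j hj x hx m hm :
        ⨆ (j) (_ : q j), B j ≤ C.comap (toEnd R L M x)) hm
  exact hA hx

/-- If `L = H + span P` and `P` kills `v`, then the `H`-submodule generated by `v` is
`L`-stable: for `w` in the subspace `T` of elements of it sent into it by `P`, every `⁅x, w⁆`
lies in it as well, and the Jacobi identity shows that `T` is `H`-stable. -/
theorem lie_mem_lieSpan_of_sup_span_eq_top (H : LieSubalgebra R L) {P : Set L}
    (hHP : H.toSubmodule ⊔ Submodule.span R P = ⊤) {v : M} (hv : ∀ x ∈ P, ⁅x, v⁆ = 0)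
    (x : L) {m : M} (hm : m ∈ LieSubmodule.lieSpan R H {v}) :
    ⁅x, m⁆ ∈ LieSubmodule.lieSpan R H {v} := by
  set N := LieSubmodule.lieSpan R H {v}
  have lie_mem_of_forall_mem : ∀ w ∈ N, (∀ y ∈ P, ⁅y, w⁆ ∈ N) → ∀ x : L, ⁅x, w⁆ ∈ N := by
    intro w hw hPw x
    have : H.toSubmodule ⊔ Submodule.span R P ≤
        (N : Submodule R M).comap ((toEnd R L M : L →ₗ[R] M →ₗ[R] M).flip w) :=
      sup_le (fun y hy => N.lie_mem (x := (⟨y, hy⟩ : H)) hw) (Submodule.span_le.mpr hPw)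
    exact this (hHP ▸ Submodule.mem_top)
  let T : LieSubmodule R H M :=
    { (N : Submodule R M) ⊓ ⨅ y ∈ P, (N : Submodule R M).comap (toEnd R L M y) with
      lie_mem := by
        rintro ⟨y, hy⟩ w hw
        obtain ⟨hwN, hwP⟩ := Submodule.mem_inf.mp hw
        replace hwP : ∀ z ∈ P, ⁅z, w⁆ ∈ N := by simpa using hwP
        refine Submodule.mem_inf.mpr ⟨N.lie_mem hwN, ?_⟩
        simp only [Submodule.mem_iInf, Submodule.mem_comap, toEnd_apply_apply,
          LieSubalgebra.coe_bracket_of_module]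
        intro z hz
        rw [leibniz_lie]
        exact N.add_mem (lie_mem_of_forall_mem w hwN hwP _)
          (N.lie_mem (x := ⟨y, hy⟩) (hwP z hz)) }
  have hNT : N ≤ T := LieSubmodule.lieSpan_le.mpr <| Set.singleton_subset_iff.mpr
    ⟨LieSubmodule.subset_lieSpan rfl, by
      simpa using fun y hy => (hv y hy) ▸ N.zero_mem⟩
  exact lie_mem_of_forall_mem m hm (by simpa using (hNT hm).2) x

end

section Grading

variable (R : Type*) {L : Type*} (M : Type*) [CommRing R] [LieRing L] [LieAlgebra R L]
  [AddCommGroup M] [Module R M] [LieRingModule L M] [LieModule R L M]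

/-- `𝔤₀ ⊕ 𝔭₋` for the grading of `L` by the integer eigenvalues of `ad Z`. -/
def nonposPart (Z : L) : LieSubalgebra R L where
  toSubmodule := ⨆ (i : ℤ) (_ : i ≤ 0), eigenspace (LieAlgebra.ad R L Z) (i : R)
  lie_mem' {x y} hx hy := by
    refine lie_mem_of_mem_biSup (fun i hi j hj x hx y hy => ?_) hx hy
    refine Submodule.mem_iSup_of_mem (j + i) (Submodule.mem_iSup_of_mem (by omega) ?_)
    simpa [add_comm] using lie_mem_eigenspace_add hx hy

/-- `ker 𝔭₊`, the vectors killed by every positively graded element of `L`. -/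
def kerPositivePart (Z : L) : Submodule R M :=
  ⨅ (i : ℤ) (_ : 0 < i), ⨅ x ∈ eigenspace (LieAlgebra.ad R L Z) (i : R), (toEnd R L M x).ker

variable {R M}

theorem mem_kerPositivePart {Z : L} {v : M} :
    v ∈ kerPositivePart R M Z ↔
      ∀ i : ℤ, 0 < i → ∀ x ∈ eigenspace (LieAlgebra.ad R L Z) (i : R), ⁅x, v⁆ = 0 := by
  simp [kerPositivePart]

theorem toEnd_mem_kerPositivePart {Z : L} {v : M} (hv : v ∈ kerPositivePart R M Z) :
    toEnd R L M Z v ∈ kerPositivePart R M Z := by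
  rw [mem_kerPositivePart] at hv ⊢
  intro i hi x hx
  have hZx : ⁅x, Z⁆ = -((i : R) • x) := by
    rw [← lie_skew, ← LieAlgebra.ad_apply R, mem_eigenspace_iff.mp hx]
  rw [toEnd_apply_apply, leibniz_lie, hZx, neg_lie, smul_lie, hv i hi x hx]
  simp

theorem nonposPart_sup_span_eq_top {Z : L}
    (hgrad : ⨆ i : ℤ, eigenspace (LieAlgebra.ad R L Z) (i : R) = ⊤) :
    (nonposPart R Z).toSubmodule ⊔
        Submodule.span R {x | ∃ i : ℤ, 0 < i ∧ x ∈ eigenspace (LieAlgebra.ad R L Z) (i : R)} =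
      ⊤ := by
  refine top_le_iff.mp (hgrad ▸ iSup_le fun i => ?_)
  rcases le_or_gt i 0 with hi | hi
  · exact le_sup_of_le_left (le_iSup₂_of_le i hi le_rfl)
  · exact le_sup_of_le_right fun x hx => Submodule.subset_span ⟨i, hi, hx⟩

theorem lieSpan_nonposPart_eq_top (hirr : ∀ N : LieSubmodule R L M, N = ⊥ ∨ N = ⊤) {Z : L}
    (hgrad : ⨆ i : ℤ, eigenspace (LieAlgebra.ad R L Z) (i : R) = ⊤)
    {v : M} (hv0 : v ≠ 0) (hv : v ∈ kerPositivePart R M Z) :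
    (LieSubmodule.lieSpan R (nonposPart R Z) {v} : Submodule R M) = ⊤ := by
  let N : LieSubmodule R L M :=
    { (LieSubmodule.lieSpan R (nonposPart R Z) {v} : Submodule R M) with
      lie_mem := fun {x _} hw => lie_mem_lieSpan_of_sup_span_eq_top _
        (nonposPart_sup_span_eq_top hgrad)
        (fun _ ⟨i, hi, hx⟩ => mem_kerPositivePart.mp hv i hi _ hx) x hw }
  have hvN : v ∈ N := LieSubmodule.subset_lieSpan (Set.mem_singleton v)
  rcases hirr N with hN | hN
  · exact absurd ((LieSubmodule.mem_bot v).mp (hN ▸ hvN)) hv0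
  · exact congrArg LieSubmodule.toSubmodule hN

end Grading

section HighestWeight

variable {K L M : Type*} [Field K] [LinearOrder K] [IsStrictOrderedRing K]
  [LieRing L] [LieAlgebra K L] [AddCommGroup M] [Module K M] [LieRingModule L M]
  [LieModule K L M]

theorem lieSpan_nonposPart_le {Z : L} {v : M} {θ : K} (hv : v ∈ eigenspace (toEnd K L M Z) θ) :
    (LieSubmodule.lieSpan K (nonposPart K Z) {v} : Submodule K M) ≤
      ⨆ (θ' : K) (_ : θ' ≤ θ), eigenspace (toEnd K L M Z) θ' := by
  let W : LieSubmodule K (nonposPart K Z) M :=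
    { toSubmodule := ⨆ (θ' : K) (_ : θ' ≤ θ), eigenspace (toEnd K L M Z) θ'
      lie_mem := fun {y _} hw => by
        refine lie_mem_of_mem_biSup (fun i hi θ' hθ' x hx u hu => ?_) y.2 hw
        have hi' : (i : K) ≤ 0 := Int.cast_nonpos.mpr hi
        exact Submodule.mem_iSup_of_mem (θ' + i)
          (Submodule.mem_iSup_of_mem (by linarith) (lie_mem_eigenspace_add hx hu)) }
  exact (LieSubmodule.toSubmodule_le_toSubmodule _ W).mpr <| LieSubmodule.lieSpan_le.mpr <|
    Set.singleton_subset_iff.mpr (Submodule.mem_iSup_of_mem θ (Submodule.mem_iSup_of_mem le_rfl hv))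

theorem le_of_mem_kerPositivePart_inf_eigenspace
    (hirr : ∀ N : LieSubmodule K L M, N = ⊥ ∨ N = ⊤) {Z : L}
    (hgrad : ⨆ i : ℤ, eigenspace (LieAlgebra.ad K L Z) (i : K) = ⊤)
    {v : M} {θ : K} (hv : v ∈ kerPositivePart K M Z ⊓ eigenspace (toEnd K L M Z) θ)
    (hv0 : v ≠ 0) {μ : K} (hμ : eigenspace (toEnd K L M Z) μ ≠ ⊥) : μ ≤ θ := by
  have hle :
      eigenspace (toEnd K L M Z) μ ≤ ⨆ (θ' : K) (_ : θ' ≤ θ), eigenspace (toEnd K L M Z) θ' :=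
    calc eigenspace (toEnd K L M Z) μ
        ≤ LieSubmodule.lieSpan K (nonposPart K Z) {v} := by
          rw [lieSpan_nonposPart_eq_top hirr hgrad hv0 hv.1]; exact le_top
      _ ≤ _ := lieSpan_nonposPart_le hv.2
  by_contra! hθμ
  exact hμ <| ((eigenspaces_iSupIndep (toEnd K L M Z)).disjoint_biSup
    (y := {θ' | θ' ≤ θ}) (not_le.mpr hθμ)).eq_bot_of_le hle

theorem kerPositivePart_inf_eigenspace_le (hirr : ∀ N : LieSubmodule K L M, N = ⊥ ∨ N = ⊤)
    {Z : L} (hgrad : ⨆ i : ℤ, eigenspace (LieAlgebra.ad K L Z) (i : K) = ⊤) {θmax : K}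
    (hne : eigenspace (toEnd K L M Z) θmax ≠ ⊥)
    (hmax : ∀ θ : K, eigenspace (toEnd K L M Z) θ ≠ ⊥ → θ ≤ θmax) (θ : K) :
    kerPositivePart K M Z ⊓ eigenspace (toEnd K L M Z) θ ≤ eigenspace (toEnd K L M Z) θmax := by
  intro v hv
  rcases eq_or_ne v 0 with rfl | hv0
  · exact Submodule.zero_mem _
  have hθ : θ = θmax := le_antisymm
    (hmax θ fun h => hv0 ((Submodule.mem_bot K).mp (h ▸ hv.2)))
    (le_of_mem_kerPositivePart_inf_eigenspace hirr hgrad hv hv0 hne)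
  exact hθ ▸ hv.2

theorem eigenspace_le_kerPositivePart {Z : L} {θmax : K}
    (hmax : ∀ θ : K, eigenspace (toEnd K L M Z) θ ≠ ⊥ → θ ≤ θmax) :
    eigenspace (toEnd K L M Z) θmax ≤ kerPositivePart K M Z := by
  refine fun v hv => mem_kerPositivePart.mpr fun i hi x hx => ?_
  have hxv := lie_mem_eigenspace_add hx hv
  by_contra hxv0
  have := hmax _ fun h => hxv0 ((Submodule.mem_bot K).mp (h ▸ hxv))
  have hi' : (0 : K) < i := Int.cast_pos.mpr hi
  linarith

end HighestWeight

theorem ker_positive_part_eq_top_eigenspace_general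
    (L : Type*) [LieRing L] [LieAlgebra ℝ L]
    (V : Type*) [AddCommGroup V] [Module ℝ V] [LieRingModule L V] [LieModule ℝ L V]
    [FiniteDimensional ℝ V]
    (hirr : ∀ N : LieSubmodule ℝ L V, N = ⊥ ∨ N = ⊤)
    (Z : L)
    (hgrad : ⨆ i : ℤ, Module.End.eigenspace (LieAlgebra.ad ℝ L Z) (i : ℝ) = ⊤)
    (hdiag : ⨆ θ : ℝ, Module.End.eigenspace (LieModule.toEnd ℝ L V Z) θ = ⊤)
    (θmax : ℝ)
    (hne : Module.End.eigenspace (LieModule.toEnd ℝ L V Z) θmax ≠ ⊥)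
    (hmax : ∀ θ : ℝ, Module.End.eigenspace (LieModule.toEnd ℝ L V Z) θ ≠ ⊥ → θ ≤ θmax) :
    {v : V | ∀ (i : ℤ), 0 < i →
        ∀ x ∈ Module.End.eigenspace (LieAlgebra.ad ℝ L Z) (i : ℝ), ⁅x, v⁆ = 0} =
      ↑(Module.End.eigenspace (LieModule.toEnd ℝ L V Z) θmax) := by
  have hker : kerPositivePart ℝ V Z = eigenspace (toEnd ℝ L V Z) θmax := by
    refine le_antisymm ?_ (eigenspace_le_kerPositivePart hmax)
    calc kerPositivePart ℝ V Z
        = kerPositivePart ℝ V Z ⊓ ⨆ θ, eigenspace (toEnd ℝ L V Z) θ := by rw [hdiag, inf_top_eq]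
      _ = ⨆ θ, kerPositivePart ℝ V Z ⊓ eigenspace (toEnd ℝ L V Z) θ :=
          Submodule.inf_iSup_genEigenspace (fun _ => toEnd_mem_kerPositivePart) 1
      _ ≤ eigenspace (toEnd ℝ L V Z) θmax :=
          iSup_le (kerPositivePart_inf_eigenspace_le hirr hgrad hne hmax)
  ext v
  rw [← hker]
  exact mem_kerPositivePart.symm

/-- **Proposition 2.3 (kernel identity).** Let `L` be a finite-dimensional real Lie algebra
with a `ℤ`-grading induced by a grading element `Z` (the eigenspaces of `ad Z` with integer
eigenvalues span `L`), and let `V` be a nonzero finite-dimensional irreducible Lie module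
over `L` on which `Z` acts diagonalizably with real eigenvalues. If `θmax` is the largest
eigenvalue of the action of `Z` on `V`, then the set of vectors annihilated by all
positively graded elements of `L` (i.e. `ker 𝔭₊`) is exactly the `θmax`-eigenspace
`V_{θmax}` of the action of `Z`. -/
theorem ker_positive_part_eq_top_eigenspace
    (L : Type*) [LieRing L] [LieAlgebra ℝ L] [FiniteDimensional ℝ L]
    (V : Type*) [AddCommGroup V] [Module ℝ V] [LieRingModule L V] [LieModule ℝ L V]
    [FiniteDimensional ℝ V] [Nontrivial V]
    (hirr : ∀ N : LieSubmodule ℝ L V, N = ⊥ ∨ N = ⊤)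
    (Z : L)
    (hgrad : ⨆ i : ℤ, Module.End.eigenspace (LieAlgebra.ad ℝ L Z) (i : ℝ) = ⊤)
    (hdiag : ⨆ θ : ℝ, Module.End.eigenspace (LieModule.toEnd ℝ L V Z) θ = ⊤)
    (θmax : ℝ)
    (hne : Module.End.eigenspace (LieModule.toEnd ℝ L V Z) θmax ≠ ⊥)
    (hmax : ∀ θ : ℝ, Module.End.eigenspace (LieModule.toEnd ℝ L V Z) θ ≠ ⊥ → θ ≤ θmax) :
    {v : V | ∀ (i : ℤ), 0 < i →
        ∀ x ∈ Module.End.eigenspace (LieAlgebra.ad ℝ L Z) (i : ℝ), ⁅x, v⁆ = 0} =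
      ↑(Module.End.eigenspace (LieModule.toEnd ℝ L V Z) θmax) :=
  ker_positive_part_eq_top_eigenspace_general L V hirr Z hgrad hdiag θmax hne hmax
end

section
/- Let L be a finite-dimensional Lie algebra over ℝ, V a nonzero finite-dimensional Lie module over L that is irreducible (every Lie submodule of V is ⊥ or ⊤), and Z ∈ L. Assume: (i) the adjoint endomorphism ad Z of L is diagonalizable with integer eigenvalues, i.e., the supremum over i ∈ ℤ of the eigenspaces of ad Z with eigenvalue i is all of L; (ii) the action of Z on V is diagonalizable over ℝ, i.e., the supremum over θ ∈ ℝ of the eigenspaces of the endomorphism v ↦ ⁅Z, v⁆ is all of V. Let θmax be the largest real number whose eigenspace for the action of Z on V is nonzero, and let W₀ be that eigenspace. Then for every ℝ-subspace W ⊆ W₀ satisfying ⁅x, w⁆ ∈ W for all w ∈ W and all x in the 0-eigenspace of ad Z, one has W = 0 or W = W₀. (That is, the zero-graded subalgebra 𝔤₀ acts irreducibly on the top eigenspace V_{θmax}.) -/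
/-!
Let `M` be the smallest subspace containing `W` and stable under the negative-degree part `𝔤₋`
of the grading (in the paper's notation, `U(𝔤₋) · W`). Since `𝔤₊` kills `V_{θmax}` and `𝔤₀`
preserves `W`, the Jacobi identity shows that `M` is stable under every homogeneous element, hence
is a Lie submodule; as `W ≠ 0`, irreducibility gives `M = V`. But `𝔤₋` strictly lowers
`Z`-eigenvalues, so `M ⊆ W ⊕ ⨁_{θ < θmax} V_θ`, and intersecting with `V_{θmax}` gives `W = V_{θmax}`.
-/

open Module End LieAlgebra LieModule

section Closure

variable {R L V : Type*} [CommRing R] [LieRing L] [LieAlgebra R L]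
  [AddCommGroup V] [Module R V] [LieRingModule L V]

lemma lie_mem_eigenspace_add_s3 [LieModule R L V] {Z x : L} {v : V} {μ θ : R}
    (hx : x ∈ eigenspace (ad R L Z) μ) (hv : v ∈ eigenspace (toEnd R L V Z) θ) :
    ⁅x, v⁆ ∈ eigenspace (toEnd R L V Z) (μ + θ) := by
  rw [mem_eigenspace_iff, ad_apply] at hx
  rw [mem_eigenspace_iff, toEnd_apply_apply] at hv ⊢
  rw [leibniz_lie, hx, hv, smul_lie, lie_smul, add_smul]

variable (R) in
def negClosure (Z : L) (W : Submodule R V) : Submodule R V :=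
  sInf {S | W ≤ S ∧ ∀ i : ℤ, i < 0 → ∀ x ∈ eigenspace (ad R L Z) (i : R), ∀ m ∈ S, ⁅x, m⁆ ∈ S}

variable {Z : L} {W : Submodule R V}

lemma le_negClosure : W ≤ negClosure R Z W :=
  le_sInf fun _ hS ↦ hS.1

lemma lie_mem_negClosure_of_neg {i : ℤ} (hi : i < 0) {x : L}
    (hx : x ∈ eigenspace (ad R L Z) (i : R)) {m : V} (hm : m ∈ negClosure R Z W) :
    ⁅x, m⁆ ∈ negClosure R Z W := by
  simp only [negClosure, Submodule.mem_sInf] at hm ⊢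
  exact fun S hS ↦ hS.2 i hi x hx m (hm S hS)

lemma negClosure_le {S : Submodule R V} (hWS : W ≤ S)
    (hS : ∀ i : ℤ, i < 0 → ∀ x ∈ eigenspace (ad R L Z) (i : R), ∀ m ∈ S, ⁅x, m⁆ ∈ S) :
    negClosure R Z W ≤ S :=
  sInf_le ⟨hWS, hS⟩

lemma lie_mem_negClosure_of_homogeneous [LieModule R L V]
    (hWzero : ∀ x ∈ eigenspace (ad R L Z) 0, ∀ w ∈ W, ⁅x, w⁆ ∈ W)
    (hWpos : ∀ i : ℤ, 0 < i → ∀ x ∈ eigenspace (ad R L Z) (i : R), ∀ w ∈ W, ⁅x, w⁆ = 0)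
    {j : ℤ} {y : L} (hy : y ∈ eigenspace (ad R L Z) (j : R)) {m : V}
    (hm : m ∈ negClosure R Z W) : ⁅y, m⁆ ∈ negClosure R Z W := by
  set M := negClosure R Z W
  -- By `⁅y, ⁅x, m⁆⁆ = ⁅⁅y, x⁆, m⁆ + ⁅x, ⁅y, m⁆⁆`, `T` is stable under `𝔤₋`, so it contains `M`.
  let T : Submodule R V :=
    ⨅ (j : ℤ) (y ∈ eigenspace (ad R L Z) (j : R)), M.comap (toEnd R L V y)
  have mem_T {m : V} :
      m ∈ T ↔ ∀ j : ℤ, ∀ y ∈ eigenspace (ad R L Z) (j : R), ⁅y, m⁆ ∈ M := by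
    simp only [T, Submodule.mem_iInf, Submodule.mem_comap, toEnd_apply_apply]
  have hWT : W ≤ T := by
    intro w hw
    refine mem_T.2 fun j y hy ↦ ?_
    rcases lt_trichotomy j 0 with hj | rfl | hj
    · exact lie_mem_negClosure_of_neg hj hy (le_negClosure hw)
    · exact le_negClosure (hWzero y (by exact_mod_cast hy) w hw)
    · rw [hWpos j hj y hy w hw]
      exact zero_mem M
  have hT : ∀ i : ℤ, i < 0 → ∀ x ∈ eigenspace (ad R L Z) (i : R), ∀ m ∈ T, ⁅x, m⁆ ∈ T := by
    intro i hi x hx m hm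
    refine mem_T.2 fun j y hy ↦ ?_
    have hyx : ⁅y, x⁆ ∈ eigenspace (ad R L Z) ((j + i : ℤ) : R) := by
      push_cast
      exact lie_mem_eigenspace_add_s3 (V := L) hy hx
    rw [leibniz_lie]
    exact add_mem (mem_T.1 hm _ _ hyx) (lie_mem_negClosure_of_neg hi hx (mem_T.1 hm j y hy))
  exact mem_T.1 (negClosure_le hWT hT hm) j y hy

lemma lie_mem_negClosure [LieModule R L V] (hgrad : ⨆ i : ℤ, eigenspace (ad R L Z) (i : R) = ⊤)
    (hWzero : ∀ x ∈ eigenspace (ad R L Z) 0, ∀ w ∈ W, ⁅x, w⁆ ∈ W)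
    (hWpos : ∀ i : ℤ, 0 < i → ∀ x ∈ eigenspace (ad R L Z) (i : R), ∀ w ∈ W, ⁅x, w⁆ = 0)
    (x : L) {m : V} (hm : m ∈ negClosure R Z W) : ⁅x, m⁆ ∈ negClosure R Z W := by
  have hx : x ∈ ⨆ i : ℤ, eigenspace (ad R L Z) (i : R) := hgrad ▸ Submodule.mem_top
  refine Submodule.iSup_induction _ (motive := fun x ↦ ⁅x, m⁆ ∈ negClosure R Z W) hx
    (fun i y hy ↦ lie_mem_negClosure_of_homogeneous hWzero hWpos hy hm) ?_ ?_
  · simp only [zero_lie, zero_mem]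
  · intro y y' hy hy'
    simpa only [add_lie] using add_mem hy hy'

end Closure

lemma disjoint_eigenspace_iSup_lt {K V : Type*} [Field K] [LinearOrder K] [AddCommGroup V]
    [Module K V] (f : End K V) (θ : K) :
    Disjoint (f.eigenspace θ) (⨆ (μ : K) (_ : μ < θ), f.eigenspace μ) :=
  (f.eigenspaces_iSupIndep θ).mono_right <|
    iSup₂_le fun μ hμ ↦ le_iSup₂ (f := fun μ (_ : μ ≠ θ) ↦ f.eigenspace μ) μ hμ.ne

section Ordered

variable {K L V : Type*} [Field K] [LinearOrder K] [IsStrictOrderedRing K]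
  [LieRing L] [LieAlgebra K L] [AddCommGroup V] [Module K V] [LieRingModule L V] [LieModule K L V]
  {Z : L} {θmax : K}

lemma lie_eq_zero_of_forall_le
    (hmax : ∀ θ : K, eigenspace (toEnd K L V Z) θ ≠ ⊥ → θ ≤ θmax)
    {μ : K} (hμ : 0 < μ) {x : L} (hx : x ∈ eigenspace (ad K L Z) μ)
    {v : V} (hv : v ∈ eigenspace (toEnd K L V Z) θmax) : ⁅x, v⁆ = 0 := by
  have hbot : eigenspace (toEnd K L V Z) (μ + θmax) = ⊥ := by
    by_contra h
    linarith [hmax _ h]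
  simpa [hbot] using lie_mem_eigenspace_add_s3 hx hv

lemma negClosure_le_sup_iSup_lt {W : Submodule K V}
    (hW : W ≤ eigenspace (toEnd K L V Z) θmax) :
    negClosure K Z W ≤ W ⊔ ⨆ (θ : K) (_ : θ < θmax), eigenspace (toEnd K L V Z) θ := by
  set P := ⨆ (θ : K) (_ : θ < θmax), eigenspace (toEnd K L V Z) θ
  refine negClosure_le le_sup_left fun i hi x hx m hm ↦ Submodule.mem_sup_right ?_
  have hi' : (i : K) < 0 := by exact_mod_cast hi
  have lower {θ : K} (hθ : θ ≤ θmax) {v : V} (hv : v ∈ eigenspace (toEnd K L V Z) θ) :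
      ⁅x, v⁆ ∈ P :=
    Submodule.mem_iSup_of_mem (i + θ : K) <|
      Submodule.mem_iSup_of_mem (by linarith) (lie_mem_eigenspace_add_s3 hx hv)
  have hP : W ⊔ P ≤ P.comap (toEnd K L V x) := by
    refine sup_le (fun w hw ↦ lower le_rfl (hW hw)) (iSup₂_le fun θ hθ v hv ↦ ?_)
    exact lower hθ.le hv
  simpa using hP hm

end Ordered

theorem g0_acts_irreducibly_on_top_eigenspace_general
    (L : Type*) [LieRing L] [LieAlgebra ℝ L]
    (V : Type*) [AddCommGroup V] [Module ℝ V] [LieRingModule L V] [LieModule ℝ L V]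
    (hirr : ∀ N : LieSubmodule ℝ L V, N = ⊥ ∨ N = ⊤)
    (Z : L)
    (hgrad : ⨆ i : ℤ, Module.End.eigenspace (LieAlgebra.ad ℝ L Z) (i : ℝ) = ⊤)
    (θmax : ℝ)
    (hmax : ∀ θ : ℝ, Module.End.eigenspace (LieModule.toEnd ℝ L V Z) θ ≠ ⊥ → θ ≤ θmax) :
    ∀ W : Submodule ℝ V,
      W ≤ Module.End.eigenspace (LieModule.toEnd ℝ L V Z) θmax →
      (∀ x ∈ Module.End.eigenspace (LieAlgebra.ad ℝ L Z) (0 : ℝ),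
        ∀ w ∈ W, ⁅x, w⁆ ∈ W) →
      W = ⊥ ∨ W = Module.End.eigenspace (LieModule.toEnd ℝ L V Z) θmax := by
  intro W hW hWzero
  rcases eq_or_ne W ⊥ with hbot | hne
  · exact Or.inl hbot
  right
  set E := eigenspace (toEnd ℝ L V Z) θmax
  set P := ⨆ (θ : ℝ) (_ : θ < θmax), eigenspace (toEnd ℝ L V Z) θ
  let N : LieSubmodule ℝ L V :=
    { toSubmodule := negClosure ℝ Z W
      lie_mem := fun {x _} ↦ lie_mem_negClosure hgrad hWzero (fun i hi y hy w hw ↦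
        lie_eq_zero_of_forall_le hmax (by exact_mod_cast hi) hy (hW hw)) x }
  have hN : N = ⊤ := (hirr N).resolve_left fun h ↦ hne <| le_bot_iff.1 <|
    le_negClosure.trans ((LieSubmodule.toSubmodule_eq_bot N).2 h).le
  have hEWP : E ≤ W ⊔ P :=
    (le_top.trans_eq ((LieSubmodule.toSubmodule_eq_top N).2 hN).symm).trans
      (negClosure_le_sup_iSup_lt hW)
  refine le_antisymm hW (le_of_eq ?_)
  calc E = (W ⊔ P) ⊓ E := (inf_eq_right.2 hEWP).symm
    _ = W ⊔ P ⊓ E := sup_inf_assoc_of_le P hW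
    _ = W := by rw [(disjoint_eigenspace_iSup_lt _ θmax).symm.eq_bot, sup_bot_eq]

/-- **Proposition 2.3 (irreducibility assertion).** Let `L` be a finite-dimensional real Lie
algebra with a `ℤ`-grading induced by a grading element `Z`, and `V` a nonzero
finite-dimensional irreducible Lie module over `L` on which `Z` acts diagonalizably with
real eigenvalues. Let `θmax` be the largest eigenvalue of the action of `Z` on `V` and `W₀`
its eigenspace. Then every subspace `W ⊆ W₀` invariant under the action of the zero-graded
part `𝔤₀` (the `0`-eigenspace of `ad Z`) is `0` or all of `W₀`; that is, `𝔤₀` acts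
irreducibly on `V_{θmax}`. -/
theorem g0_acts_irreducibly_on_top_eigenspace
    (L : Type*) [LieRing L] [LieAlgebra ℝ L] [FiniteDimensional ℝ L]
    (V : Type*) [AddCommGroup V] [Module ℝ V] [LieRingModule L V] [LieModule ℝ L V]
    [FiniteDimensional ℝ V] [Nontrivial V]
    (hirr : ∀ N : LieSubmodule ℝ L V, N = ⊥ ∨ N = ⊤)
    (Z : L)
    (hgrad : ⨆ i : ℤ, Module.End.eigenspace (LieAlgebra.ad ℝ L Z) (i : ℝ) = ⊤)
    (hdiag : ⨆ θ : ℝ, Module.End.eigenspace (LieModule.toEnd ℝ L V Z) θ = ⊤)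
    (θmax : ℝ)
    (hne : Module.End.eigenspace (LieModule.toEnd ℝ L V Z) θmax ≠ ⊥)
    (hmax : ∀ θ : ℝ, Module.End.eigenspace (LieModule.toEnd ℝ L V Z) θ ≠ ⊥ → θ ≤ θmax) :
    ∀ W : Submodule ℝ V,
      W ≤ Module.End.eigenspace (LieModule.toEnd ℝ L V Z) θmax →
      (∀ x ∈ Module.End.eigenspace (LieAlgebra.ad ℝ L Z) (0 : ℝ),
        ∀ w ∈ W, ⁅x, w⁆ ∈ W) →
      W = ⊥ ∨ W = Module.End.eigenspace (LieModule.toEnd ℝ L V Z) θmax :=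
  g0_acts_irreducibly_on_top_eigenspace_general L V hirr Z hgrad θmax hmax
end

section
/- Let V be a finite-dimensional real normed vector space, A : V →L[ℝ] V a continuous linear endomorphism, and G a subgroup of the group of linear automorphisms of V. Assume that for every t ∈ ℝ there exists g ∈ G that acts on V as the operator exponential exp(t • A). Let s be a nonempty finite set of real numbers, for each θ ∈ s let v(θ) ∈ V satisfy A(v(θ)) = θ • v(θ), let θmax be the maximum of s, assume v(θmax) ≠ 0, and set v = ∑_{θ ∈ s} v(θ). Define the punctured cone over the projective orbit of v as C = {c • (g v) | g ∈ G, c ∈ ℝ, c ≠ 0}. If C is a closed subset of V \ {0} (in the subspace topology), then v(θmax) ∈ C; that is, there exist g ∈ G and c ≠ 0 with c • (g v) = v(θmax). -/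
/-! The flow `exp (t • A)` scales each eigencomponent `v θ` by `exp (t θ)`, so after
rescaling by `exp (-t θmax)` the points `exp (-t θmax) • exp (t • A) w` of the cone tend to
`v θmax` as `t → ∞`: all other components decay like `exp (t (θ - θmax))`. The limit is
nonzero, so closedness of the cone in `V \ {0}` puts it in the cone. -/

open Filter Topology

theorem ContinuousLinearMap.pow_apply_of_apply_eq_smul {V : Type*} [AddCommMonoid V]
    [Module ℝ V] [TopologicalSpace V] {B : V →L[ℝ] V} {a : ℝ} {u : V} (h : B u = a • u)
    (n : ℕ) : (B ^ n) u = a ^ n • u := by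
  induction n with
  | zero => simp
  | succ n ih => rw [pow_succ, pow_succ, mul_apply_eq_comp, h, map_smul, ih, smul_smul, mul_comm]

theorem NormedSpace.exp_apply_of_apply_eq_smul {V : Type*} [NormedAddCommGroup V]
    [NormedSpace ℝ V] [CompleteSpace V] {B : V →L[ℝ] V} {a : ℝ} {u : V} (h : B u = a • u) :
    exp B u = Real.exp a • u := by
  have hB : HasSum (fun n : ℕ => (n.factorial⁻¹ : ℝ) • a ^ n • u) (exp B u) := by
    simpa only [ContinuousLinearMap.apply_apply, smul_apply, B.pow_apply_of_apply_eq_smul h] using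
      (exp_series_hasSum_exp' (𝕂 := ℝ) B).mapL (ContinuousLinearMap.apply ℝ V u)
  have ha : HasSum (fun n : ℕ => (n.factorial⁻¹ : ℝ) • a ^ n • u) (Real.exp a • u) := by
    simpa only [smul_smul, smul_eq_mul, ← Real.exp_eq_exp_ℝ] using
      (exp_series_hasSum_exp' (𝕂 := ℝ) a).smul_const u
  exact hB.unique ha

theorem NormedSpace.exp_smul_apply_sum_of_apply_eq_smul {V : Type*} [NormedAddCommGroup V]
    [NormedSpace ℝ V] [CompleteSpace V] {A : V →L[ℝ] V} {s : Finset ℝ} {v : ℝ → V}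
    (hv : ∀ θ ∈ s, A (v θ) = θ • v θ) (t : ℝ) :
    exp (t • A) (∑ θ ∈ s, v θ) = ∑ θ ∈ s, Real.exp (t * θ) • v θ := by
  rw [map_sum]
  refine Finset.sum_congr rfl fun θ hθ => exp_apply_of_apply_eq_smul ?_
  rw [smul_apply, hv θ hθ, smul_smul]

theorem tendsto_sum_exp_mul_sub_smul_atTop {E : Type*} [AddCommMonoid E] [TopologicalSpace E]
    [ContinuousAdd E] [Module ℝ E] [ContinuousSMul ℝ E] {s : Finset ℝ} {θmax : ℝ}
    (hmax : θmax ∈ s) (hle : ∀ θ ∈ s, θ ≤ θmax) (v : ℝ → E) :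
    Tendsto (fun t => ∑ θ ∈ s, Real.exp (t * (θ - θmax)) • v θ) atTop (𝓝 (v θmax)) := by
  have hlim : ∑ θ ∈ s, (if θmax = θ then v θ else 0) = v θmax := by
    rw [Finset.sum_ite_eq, if_pos hmax]
  rw [← hlim]
  refine tendsto_finsetSum _ fun θ hθ => ?_
  split_ifs with h
  · subst h
    simp only [sub_self, mul_zero, Real.exp_zero, one_smul]
    exact tendsto_const_nhds
  · have hneg : θ - θmax < 0 := sub_neg.mpr ((hle θ hθ).lt_of_ne' h)
    simpa using (Real.tendsto_exp_atBot.comp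
      (tendsto_id.atTop_mul_const_of_neg hneg)).smul_const (v θ)

theorem mem_of_tendsto_of_isClosed_preimage_val {X α : Type*} [TopologicalSpace X]
    {p : X → Prop} (hp : IsOpen {x | p x}) {S : Set X}
    (hS : IsClosed ((fun x : Subtype p => (x : X)) ⁻¹' S)) {l : Filter α} [l.NeBot]
    {f : α → X} {x : X} (hx : p x) (hf : Tendsto f l (𝓝 x)) (hfS : ∀ᶠ a in l, f a ∈ S) :
    x ∈ S := by
  obtain ⟨T, hT, hTS⟩ := isClosed_induced_iff.mp hS
  have hfT : ∀ᶠ a in l, f a ∈ T := by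
    filter_upwards [hfS, hf.eventually (hp.mem_nhds hx)] with a haS hap
    exact (Set.ext_iff.mp hTS ⟨f a, hap⟩).mpr haS
  exact (Set.ext_iff.mp hTS ⟨x, hx⟩).mp (hT.mem_of_tendsto hf hfT)

/-- **Theorem 2.5** (for linear group actions, in terms of the punctured cone over the
projective orbit): let `V` be a finite-dimensional real normed vector space, `A` a
continuous linear endomorphism of `V`, and `G` a subgroup of the linear automorphism group
of `V` containing the one-parameter flow `exp(t • A)`. Let `w = ∑_{θ ∈ s} v θ` where each
`v θ` satisfies `A (v θ) = θ • v θ`, let `θmax = max s`, and assume `v θmax ≠ 0`. If the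
punctured cone `C = {c • (g w) | g ∈ G, c ≠ 0}` over the projective orbit of `w` is closed
in `V \ {0}` (subspace topology), then `v θmax ∈ C`: there exist `g ∈ G` and `c ≠ 0` with
`c • (g w) = v θmax`. -/
theorem closed_projective_orbit_contains_top_eigenvector
    (V : Type*) [NormedAddCommGroup V] [NormedSpace ℝ V] [FiniteDimensional ℝ V]
    (A : V →L[ℝ] V) (G : Subgroup (V ≃ₗ[ℝ] V))
    (hflow : ∀ t : ℝ, ∃ g ∈ G, ∀ u : V, g u = (NormedSpace.exp (t • A)) u)
    (s : Finset ℝ) (hs : s.Nonempty) (v : ℝ → V)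
    (hv : ∀ θ ∈ s, A (v θ) = θ • v θ)
    (θmax : ℝ) (hθmax : θmax = s.max' hs) (hvmax : v θmax ≠ 0)
    (w : V) (hw : w = ∑ θ ∈ s, v θ)
    (C : Set V) (hC : C = {u : V | ∃ g ∈ G, ∃ c : ℝ, c ≠ 0 ∧ c • (g w) = u})
    (hclosed : IsClosed ((fun x : {u : V // u ≠ 0} => (x : V)) ⁻¹' C)) :
    ∃ g ∈ G, ∃ c : ℝ, c ≠ 0 ∧ c • (g w) = v θmax := by
  have hmax : θmax ∈ s := hθmax ▸ s.max'_mem hs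
  have hle : ∀ θ ∈ s, θ ≤ θmax := fun θ hθ => hθmax ▸ s.le_max' θ hθ
  set f : ℝ → V := fun t => Real.exp (-(t * θmax)) • NormedSpace.exp (t • A) w
  have hf : ∀ t, f t = ∑ θ ∈ s, Real.exp (t * (θ - θmax)) • v θ := fun t => by
    simp only [f, hw, NormedSpace.exp_smul_apply_sum_of_apply_eq_smul hv, Finset.smul_sum, smul_smul,
      ← Real.exp_add]
    ring_nf
  have hfC : ∀ t, f t ∈ C := fun t => by
    obtain ⟨g, hg, hgA⟩ := hflow t
    exact hC ▸ ⟨g, hg, _, Real.exp_ne_zero _, by rw [hgA]⟩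
  have hlim : Tendsto f atTop (𝓝 (v θmax)) := by
    simpa only [funext hf] using tendsto_sum_exp_mul_sub_smul_atTop hmax hle v
  simpa only [hC, Set.mem_ofPred_eq] using mem_of_tendsto_of_isClosed_preimage_val isOpen_ne hclosed hvmax hlim
    (Eventually.of_forall hfC)
end

section
/- Let L be a finite-dimensional Lie algebra over ℝ, V a nonzero finite-dimensional Lie module over L that is irreducible (every Lie submodule of V is ⊥ or ⊤), and Z ∈ L. Assume: (i) the adjoint endomorphism ad Z of L is diagonalizable with integer eigenvalues, i.e., the supremum over i ∈ ℤ of the eigenspaces of ad Z with eigenvalue i is all of L; (ii) the action of Z on V is diagonalizable over ℝ, i.e., the supremum over θ ∈ ℝ of the eigenspaces of the endomorphism v ↦ ⁅Z, v⁆ is all of V. Let θmax be the largest real number whose eigenspace W₀ for the action of Z on V is nonzero. If every x in the 0-eigenspace of ad Z acts on W₀ by a scalar (i.e., for each such x there exists c ∈ ℝ with ⁅x, w⁆ = c • w for all w ∈ W₀), then W₀ is one-dimensional. -/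
/-- Vectors obtained from `w` by repeatedly applying negatively graded elements. -/
inductive GenSet (L V : Type*) [LieRing L] [LieAlgebra ℝ L] [AddCommGroup V] [Module ℝ V]
    [LieRingModule L V] (Z : L) (w : V) : V → Prop
  | base : GenSet L V Z w w
  | neg (i : ℤ) (hi : i < 0) (x : L)
      (hx : x ∈ Module.End.eigenspace (LieAlgebra.ad ℝ L Z) (i : ℝ)) (v : V)
      (hv : GenSet L V Z w v) : GenSet L V Z w ⁅x, v⁆



/-- The step in the proof of Corollary 2.6: with `L` a finite-dimensional real Lie algebra
graded by a grading element `Z` and `V` a nonzero finite-dimensional irreducible Lie module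
on which `Z` acts diagonalizably with largest eigenvalue `θmax` and corresponding eigenspace
`W₀ = V_{θmax}`, if every element of the zero-graded part `𝔤₀` (the `0`-eigenspace of
`ad Z`) acts on `W₀` by a real scalar, then `W₀` is one-dimensional. -/
theorem top_eigenspace_one_dimensional_of_scalar_action
    (L : Type*) [LieRing L] [LieAlgebra ℝ L] [FiniteDimensional ℝ L]
    (V : Type*) [AddCommGroup V] [Module ℝ V] [LieRingModule L V] [LieModule ℝ L V]
    [FiniteDimensional ℝ V] [Nontrivial V]
    (hirr : ∀ N : LieSubmodule ℝ L V, N = ⊥ ∨ N = ⊤)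
    (Z : L)
    (hgrad : ⨆ i : ℤ, Module.End.eigenspace (LieAlgebra.ad ℝ L Z) (i : ℝ) = ⊤)
    (hdiag : ⨆ θ : ℝ, Module.End.eigenspace (LieModule.toEnd ℝ L V Z) θ = ⊤)
    (θmax : ℝ)
    (hne : Module.End.eigenspace (LieModule.toEnd ℝ L V Z) θmax ≠ ⊥)
    (hmax : ∀ θ : ℝ, Module.End.eigenspace (LieModule.toEnd ℝ L V Z) θ ≠ ⊥ → θ ≤ θmax)
    (hscalar : ∀ x ∈ Module.End.eigenspace (LieAlgebra.ad ℝ L Z) (0 : ℝ),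
      ∃ c : ℝ, ∀ w ∈ Module.End.eigenspace (LieModule.toEnd ℝ L V Z) θmax,
        ⁅x, w⁆ = c • w) :
    Module.finrank ℝ (Module.End.eigenspace (LieModule.toEnd ℝ L V Z) θmax) = 1 := by
  classical
  set W₀ := Module.End.eigenspace (LieModule.toEnd ℝ L V Z) θmax with hW₀
  -- a nonzero highest weight vector
  obtain ⟨w, hwW, hw0⟩ : ∃ w ∈ W₀, w ≠ 0 := by
    by_contra h
    push_neg at h
    exact hne ((Submodule.eq_bot_iff _).mpr h)
  -- weight lemma: 𝔤_μ ⬝ V_θ ⊆ V_{θ+μ}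
  have weight : ∀ (μ : ℝ) (x : L), x ∈ Module.End.eigenspace (LieAlgebra.ad ℝ L Z) μ →
      ∀ (θ : ℝ) (v : V), v ∈ Module.End.eigenspace (LieModule.toEnd ℝ L V Z) θ →
      ⁅x, v⁆ ∈ Module.End.eigenspace (LieModule.toEnd ℝ L V Z) (θ + μ) := by
    intro μ x hx θ v hv
    rw [Module.End.mem_eigenspace_iff] at hx hv ⊢
    have hx' : ⁅Z, x⁆ = μ • x := hx
    have hv' : ⁅Z, v⁆ = θ • v := hv
    show ⁅Z, ⁅x, v⁆⁆ = (θ + μ) • ⁅x, v⁆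
    rw [leibniz_lie, hx', hv', smul_lie, lie_smul, add_smul]
    abel
  -- bracket of ad-eigenvectors
  have adweight : ∀ (μ ν : ℝ) (x y : L),
      x ∈ Module.End.eigenspace (LieAlgebra.ad ℝ L Z) μ →
      y ∈ Module.End.eigenspace (LieAlgebra.ad ℝ L Z) ν →
      ⁅x, y⁆ ∈ Module.End.eigenspace (LieAlgebra.ad ℝ L Z) (μ + ν) := by
    intro μ ν x y hx hy
    rw [Module.End.mem_eigenspace_iff] at hx hy ⊢
    have hx' : ⁅Z, x⁆ = μ • x := hx
    have hy' : ⁅Z, y⁆ = ν • y := hy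
    show ⁅Z, ⁅x, y⁆⁆ = (μ + ν) • ⁅x, y⁆
    rw [leibniz_lie, hx', hy', smul_lie, lie_smul, add_smul]
  -- eigenspaces above θmax are trivial
  have htop : ∀ θ : ℝ, θmax < θ →
      Module.End.eigenspace (LieModule.toEnd ℝ L V Z) θ = ⊥ := by
    intro θ hθ
    by_contra h
    exact absurd (hmax θ h) (not_le.mpr hθ)
  set M : Submodule ℝ V := Submodule.span ℝ {v | GenSet L V Z w v} with hM
  have hgenM : ∀ v, GenSet L V Z w v → v ∈ M := fun v hv =>
    Submodule.subset_span hv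
  have hwM : w ∈ M := hgenM w GenSet.base
  -- M is stable under negatively graded elements
  have hnegM : ∀ (i : ℤ), i < 0 → ∀ x ∈ Module.End.eigenspace (LieAlgebra.ad ℝ L Z) (i : ℝ),
      ∀ m ∈ M, ⁅x, m⁆ ∈ M := by
    intro i hi x hx m hm
    induction hm using Submodule.span_induction with
    | mem v hv => exact hgenM _ (GenSet.neg i hi x hx v hv)
    | zero => simpa using M.zero_mem
    | add a b _ _ ha hb => rw [lie_add]; exact M.add_mem ha hb
    | smul c a _ ha => rw [lie_smul]; exact M.smul_mem c ha
  -- M is stable under all homogeneous elements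
  have hhomM : ∀ v, GenSet L V Z w v → ∀ (i : ℤ),
      ∀ x ∈ Module.End.eigenspace (LieAlgebra.ad ℝ L Z) (i : ℝ), ⁅x, v⁆ ∈ M := by
    intro v hv
    induction hv with
    | base =>
      intro i x hx
      rcases lt_trichotomy i 0 with hi | hi | hi
      · exact hgenM _ (GenSet.neg i hi x hx w GenSet.base)
      · subst hi
        obtain ⟨c, hc⟩ := hscalar x (by simpa using hx)
        rw [hc w hwW]
        exact M.smul_mem c hwM
      · have : ⁅x, w⁆ ∈ Module.End.eigenspace (LieModule.toEnd ℝ L V Z) (θmax + i) :=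
          weight _ x hx _ w hwW
        have h0 : (0:ℝ) < (i:ℝ) := by exact_mod_cast hi
        rw [htop (θmax + i) (by linarith)] at this
        simp only [Submodule.mem_bot] at this
        rw [this]; exact M.zero_mem
    | neg j hj y hy v hv ih =>
      intro i x hx
      rw [leibniz_lie]
      refine M.add_mem ?_ ?_
      · have hxy : ⁅x, y⁆ ∈ Module.End.eigenspace (LieAlgebra.ad ℝ L Z) ((i + j : ℤ) : ℝ) := by
          push_cast
          exact adweight _ _ x y hx hy
        exact ih (i + j) _ hxy
      · exact hnegM j hj y hy _ (ih i x hx)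
  -- M is stable under all of L
  have hstab : ∀ (x : L), ∀ m ∈ M, ⁅x, m⁆ ∈ M := by
    intro x
    have hx : x ∈ (⊤ : Submodule ℝ L) := Submodule.mem_top
    rw [← hgrad] at hx
    set T : Submodule ℝ L :=
      { carrier := {y : L | ∀ m ∈ M, ⁅y, m⁆ ∈ M}
        zero_mem' := by intro m hm; rw [zero_lie]; exact M.zero_mem
        add_mem' := by intro a b ha hb m hm; rw [add_lie]; exact M.add_mem (ha m hm) (hb m hm)
        smul_mem' := by intro c a ha m hm; rw [smul_lie]; exact M.smul_mem c (ha m hm) } with hT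
    have : x ∈ T := by
      refine (iSup_le (fun i => ?_) : _ ≤ T) hx
      intro y hy m hm
      induction hm using Submodule.span_induction with
      | mem v hv => exact hhomM v hv i y hy
      | zero => rw [lie_zero]; exact M.zero_mem
      | add a b _ _ ha hb => rw [lie_add]; exact M.add_mem ha hb
      | smul c a _ ha => rw [lie_smul]; exact M.smul_mem c ha
    exact this
  -- M as a Lie submodule is everything
  have hMtop : ∀ v : V, v ∈ M := by
    set N : LieSubmodule ℝ L V := { toSubmodule := M, lie_mem := fun {x m} hm => hstab x m hm }
    have hN : ∀ v : V, v ∈ N ↔ v ∈ M := fun v => Iff.rfl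
    rcases hirr N with h | h
    · exfalso
      apply hw0
      have hwN : w ∈ N := hwM
      rw [h] at hwN
      simpa using hwN
    · intro v
      rw [← hN, h]
      trivial
  -- every generator is w or lies in a lower eigenspace
  have hlow : ∀ v, GenSet L V Z w v → v = w ∨ ∃ θ : ℝ, θ < θmax ∧
      v ∈ Module.End.eigenspace (LieModule.toEnd ℝ L V Z) θ := by
    intro v hv
    induction hv with
    | base => exact Or.inl rfl
    | neg i hi x hx v hv ih =>
      right
      rcases ih with rfl | ⟨θ, hθ, hvθ⟩
      · exact ⟨θmax + i, by linarith [show (i:ℝ) < 0 from by exact_mod_cast hi],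
          weight _ x hx _ _ hwW⟩
      · exact ⟨θ + i, by linarith [show (i:ℝ) < 0 from by exact_mod_cast hi],
          weight _ x hx _ _ hvθ⟩
  -- the lower part
  set Low : Submodule ℝ V := ⨆ θ : {θ : ℝ // θ < θmax},
    Module.End.eigenspace (LieModule.toEnd ℝ L V Z) θ.1 with hLow
  have hMle : M ≤ Submodule.span ℝ {w} ⊔ Low := by
    rw [hM, Submodule.span_le]
    intro v hv
    rcases hlow v hv with rfl | ⟨θ, hθ, hvθ⟩
    · exact Submodule.mem_sup_left (Submodule.mem_span_singleton_self v)
    · exact Submodule.mem_sup_right (Submodule.mem_iSup_of_mem ⟨θ, hθ⟩ hvθ)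
  -- disjointness from eigenspace independence
  have hdisj : Disjoint W₀ Low := by
    have hind := (LieModule.toEnd ℝ L V Z).eigenspaces_iSupIndep θmax
    refine hind.mono_right ?_
    refine iSup_le fun θ => ?_
    exact le_iSup_of_le θ.1 (le_iSup_of_le (ne_of_lt θ.2) le_rfl)
  -- conclude W₀ = span {w}
  have hW : W₀ = Submodule.span ℝ {w} := by
    apply le_antisymm
    · intro u hu
      have huM : u ∈ Submodule.span ℝ {w} ⊔ Low := hMle (hMtop u)
      obtain ⟨a, ha, b, hb, rfl⟩ := Submodule.mem_sup.mp huM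
      obtain ⟨c, rfl⟩ := Submodule.mem_span_singleton.mp ha
      have hbW : b ∈ W₀ := by
        have : (c • w + b) - c • w ∈ W₀ := W₀.sub_mem hu (W₀.smul_mem c hwW)
        simpa using this
      have hb0 : b = 0 := by
        have hmem : b ∈ W₀ ⊓ Low := ⟨hbW, hb⟩
        rw [disjoint_iff.mp hdisj] at hmem
        simpa using hmem
      rw [hb0, add_zero]
      exact Submodule.smul_mem _ c (Submodule.mem_span_singleton_self w)
    · rw [Submodule.span_le, Set.singleton_subset_iff]
      exact hwW
  rw [hW]
  exact finrank_span_singleton hw0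
end
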